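/- Every nontrivial finite group H embeds into a finite superperfect group so as to form a nontrivial tight pair: there exist n ≥ 4 and an injective group homomorphism φ : H → Sp(2n, 𝔽₂) whose image is a proper subgroup, such that the only normal subgroup of Sp(2n, 𝔽₂) containing φ(H) is the whole group Sp(2n, 𝔽₂). -/

import Mathlib

/-!
Cayley's theorem embeds `H` into `Perm (Fin n)` with `n = max |H| 4`, and a permutation
acting diagonally on both halves of `𝔽₂ⁿ ⊕ 𝔽₂ⁿ` is symplectic. This image contains no
transvection, so it is proper, and tightness holds because `Sp(2n, 𝔽₂)` is simple for
`n ≥ 3`.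

Simplicity goes through the transvections `t v : x ↦ x + ω(x, v) v`. They generate the group:
a symplectic `g` is brought back to the identity one hyperbolic pair `(e k, f k)` at a time, by
transvections along vectors orthogonal to the pairs already fixed. For a normal subgroup
`N ∋ g ≠ 1`, pick `x` with `g x ≠ x`; then `t x` and `t (g x)` agree modulo `N`. Since
"`t u ≡ t v` mod `N`" is invariant under conjugation, transitivity of `Sp` on hyperbolic pairs
spreads this to all nonzero vectors, so every transvection has the same image `τ` in `Sp ⧸ N`,
with `τ² = 1`. For three orthogonal independent vectors `a, b, c` (here `n ≥ 3` is needed)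
`t b t (a+b) t c t (a+c) t (b+c) t (a+b+c) = t a`, whence `τ⁶ = τ` and `τ = 1`.
-/

open scoped Matrix

namespace Matrix

variable {l R : Type*} [Fintype l] [DecidableEq l] [CommRing R]

def symplecticForm : LinearMap.BilinForm R (l ⊕ l → R) := toLinearMap₂' R (J l R)

lemma symplecticForm_apply (x y : l ⊕ l → R) : symplecticForm x y = x ⬝ᵥ (J l R *ᵥ y) :=
  toLinearMap₂'_apply' _ _ _

lemma symplecticForm_eq_sum (x y : l ⊕ l → R) :
    symplecticForm x y = ∑ i, (x (.inr i) * y (.inl i) - x (.inl i) * y (.inr i)) := by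
  simp [symplecticForm_apply, J, fromBlocks_mulVec, dotProduct, Fintype.sum_sum_type,
     sub_eq_neg_add, Finset.sum_add_distrib, neg_mulVec]

lemma symplecticForm_isAlt : (symplecticForm : LinearMap.BilinForm R (l ⊕ l → R)).IsAlt := by
  intro x
  simp [symplecticForm_eq_sum, mul_comm]

lemma symplecticForm_single_inl (x : l ⊕ l → R) (i : l) :
    symplecticForm x (Pi.single (.inl i) 1) = x (.inr i) := by
  simp [symplecticForm_eq_sum, Pi.single_apply]

lemma symplecticForm_single_inr (x : l ⊕ l → R) (i : l) :
    symplecticForm x (Pi.single (.inr i) 1) = - x (.inl i) := by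
  simp [symplecticForm_eq_sum, Pi.single_apply]

lemma symplecticForm_mulVec {A : Matrix (l ⊕ l) (l ⊕ l) R} (hA : A ∈ symplecticGroup l R)
    (x y : l ⊕ l → R) : symplecticForm (A *ᵥ x) (A *ᵥ y) = symplecticForm x y := by
  rw [symplecticForm_apply, symplecticForm_apply, ← vecMul_transpose, ← dotProduct_mulVec,
    mulVec_mulVec, mulVec_mulVec, SymplecticGroup.mem_iff'.1 hA]

lemma symplecticForm_eq_zero_of_comp_inr_eq_zero {x y : l ⊕ l → R} (hx : x ∘ Sum.inr = 0)
    (hy : y ∘ Sum.inr = 0) : symplecticForm x y = 0 := by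
  have hx' (i : l) : x (.inr i) = 0 := congrFun hx i
  have hy' (i : l) : y (.inr i) = 0 := congrFun hy i
  simp [symplecticForm_eq_sum, hx', hy']

def symplecticTransvection (v : l ⊕ l → R) : Matrix (l ⊕ l) (l ⊕ l) R :=
  1 + vecMulVec v (J l R *ᵥ v)

lemma symplecticTransvection_mulVec (v x : l ⊕ l → R) :
    symplecticTransvection v *ᵥ x = x + symplecticForm x v • v := by
  rw [symplecticTransvection, add_mulVec, one_mulVec, vecMulVec_mulVec, dotProduct_comm,
    ← symplecticForm_apply, op_smul_eq_smul]

lemma symplecticTransvection_mem (v : l ⊕ l → R) :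
    symplecticTransvection v ∈ symplecticGroup l R := by
  have hv : (J l R *ᵥ v) ⬝ᵥ v = 0 := by
    rw [dotProduct_comm, ← symplecticForm_apply]; exact symplecticForm_isAlt v
  have hvJ : v ᵥ* J l R = -(J l R *ᵥ v) := by rw [← mulVec_transpose, J_transpose, neg_mulVec]
  rw [SymplecticGroup.mem_iff', symplecticTransvection, transpose_add, transpose_one,
    transpose_vecMulVec]
  simp only [add_mul, mul_add, one_mul, mul_one, vecMulVec_mul, mul_vecMulVec, hvJ,
    neg_mulVec, vecMulVec_mulVec, hv, MulOpposite.op_zero, zero_smul, neg_zero, zero_vecMulVec,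
    add_zero, vecMulVec_neg]
  abel

lemma mul_symplecticTransvection {A : Matrix (l ⊕ l) (l ⊕ l) R} (hA : A ∈ symplecticGroup l R)
    (v : l ⊕ l → R) : A * symplecticTransvection v = symplecticTransvection (A *ᵥ v) * A := by
  rw [symplecticTransvection, symplecticTransvection, mul_add, add_mul, mul_one, one_mul,
    mul_vecMulVec, vecMulVec_mul, ← mulVec_transpose, mulVec_mulVec, mulVec_mulVec,
    SymplecticGroup.mem_iff'.1 hA]

lemma vecMulVec_mul_vecMulVec_of_symplecticForm_eq_zero {u w : l ⊕ l → R}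
    (h : symplecticForm w u = 0) :
    vecMulVec u (J l R *ᵥ u) * vecMulVec w (J l R *ᵥ w) = 0 := by
  rw [vecMulVec_mul_vecMulVec, dotProduct_comm, ← symplecticForm_apply, h, zero_smul,
    vecMulVec_zero]

lemma list_prod_map_symplecticTransvection {L : List (l ⊕ l → R)}
    (hL : ∀ u ∈ L, ∀ w ∈ L, symplecticForm u w = 0) :
    (L.map symplecticTransvection).prod = 1 + (L.map fun v => vecMulVec v (J l R *ᵥ v)).sum := by
  induction L with
  | nil => simp
  | cons u L ih =>
    have hu : vecMulVec u (J l R *ᵥ u) * (L.map fun v => vecMulVec v (J l R *ᵥ v)).sum = 0 := by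
      rw [← List.sum_map_mul_left]
      refine List.sum_eq_zero fun M hM => ?_
      obtain ⟨w, hw, rfl⟩ := List.mem_map.1 hM
      exact vecMulVec_mul_vecMulVec_of_symplecticForm_eq_zero (hL w (.tail _ hw) u (.head _))
    rw [List.map_cons, List.prod_cons, ih fun a ha b hb => hL a (.tail _ ha) b (.tail _ hb),
      symplecticTransvection, List.map_cons, List.sum_cons, add_mul, one_mul, mul_add, mul_one, hu]
    abel

end Matrix

namespace SymplecticGroup

section Coordinates

variable {l R : Type*} [CommRing R]

variable (R) in
def vanishingOn (s : Set l) : Submodule R (l ⊕ l → R) where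
  carrier := {x | ∀ i ∈ s, x (.inl i) = 0 ∧ x (.inr i) = 0}
  add_mem' hx hy i hi := by simp [(hx i hi).1, (hx i hi).2, (hy i hi).1, (hy i hi).2]
  zero_mem' _ _ := ⟨rfl, rfl⟩
  smul_mem' c x hx i hi := by simp [(hx i hi).1, (hx i hi).2]

@[simp]
lemma vanishingOn_empty : vanishingOn R (∅ : Set l) = (⊤ : Submodule R (l ⊕ l → R)) :=
  eq_top_iff.2 fun _ _ i hi => absurd hi (Set.notMem_empty i)

end Coordinates

open Matrix

variable {l R : Type*} [Fintype l] [DecidableEq l] [CommRing R]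

instance : DistribMulAction (symplecticGroup l R) (l ⊕ l → R) where
  smul A x := (A : Matrix (l ⊕ l) (l ⊕ l) R) *ᵥ x
  one_smul := one_mulVec
  mul_smul _ _ x := (mulVec_mulVec x _ _).symm
  smul_zero _ := mulVec_zero _
  smul_add _ := mulVec_add _

lemma smul_def (A : symplecticGroup l R) (x : l ⊕ l → R) :
    A • x = (A : Matrix (l ⊕ l) (l ⊕ l) R) *ᵥ x := rfl

lemma symplecticForm_smul (A : symplecticGroup l R) (x y : l ⊕ l → R) :
    symplecticForm (A • x) (A • y) = symplecticForm x y :=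
  symplecticForm_mulVec A.2 x y

lemma eq_one_of_forall_smul_single {A : symplecticGroup l R}
    (h : ∀ j, A • (Pi.single j 1 : l ⊕ l → R) = Pi.single j 1) : A = 1 := by
  ext i j
  simpa [smul_def, mulVec_single_one, Matrix.one_apply, Pi.single_apply, eq_comm] using
    congrFun (h j) i

def transvection (v : l ⊕ l → R) : symplecticGroup l R :=
  ⟨symplecticTransvection v, symplecticTransvection_mem v⟩

lemma transvection_smul (v x : l ⊕ l → R) :
    transvection v • x = x + symplecticForm x v • v :=
  symplecticTransvection_mulVec v x

@[simp]
lemma transvection_zero : transvection (0 : l ⊕ l → R) = 1 := by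
  ext : 1
  simp [transvection, symplecticTransvection]

lemma conj_transvection (A : symplecticGroup l R) (v : l ⊕ l → R) :
    A * transvection v * A⁻¹ = transvection (A • v) :=
  mul_inv_eq_iff_eq_mul.2 <| Subtype.ext <| mul_symplecticTransvection A.2 v

variable (R) in
def pairStabilizer (s : Set l) : Subgroup (symplecticGroup l R) :=
  ⨅ i ∈ s, MulAction.stabilizer _ (Pi.single (.inl i) 1 : l ⊕ l → R) ⊓
    MulAction.stabilizer _ (Pi.single (.inr i) 1 : l ⊕ l → R)

lemma mem_pairStabilizer {s : Set l} {A : symplecticGroup l R} :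
    A ∈ pairStabilizer R s ↔ ∀ i ∈ s,
      A • (Pi.single (.inl i) 1 : l ⊕ l → R) = Pi.single (.inl i) 1 ∧
      A • (Pi.single (.inr i) 1 : l ⊕ l → R) = Pi.single (.inr i) 1 := by
  simp [pairStabilizer, Subgroup.mem_iInf]

@[simp]
lemma pairStabilizer_empty : pairStabilizer R (∅ : Set l) = ⊤ := by
  simp [pairStabilizer]

@[simp]
lemma pairStabilizer_univ :
    pairStabilizer R (Set.univ : Set l) = (⊥ : Subgroup (symplecticGroup l R)) := by
  refine eq_bot_iff.2 fun A hA => eq_one_of_forall_smul_single fun j => ?_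
  obtain ⟨h₁, h₂⟩ := mem_pairStabilizer.1 hA (j.elim id id) trivial
  cases j with
  | inl i => exact h₁
  | inr i => exact h₂

lemma smul_mem_vanishingOn {s : Set l} {A : symplecticGroup l R} (hA : A ∈ pairStabilizer R s)
    {x : l ⊕ l → R} (hx : x ∈ vanishingOn R s) : A • x ∈ vanishingOn R s := by
  intro i hi
  obtain ⟨h₁, h₂⟩ := mem_pairStabilizer.1 hA i hi
  have h₁' := symplecticForm_smul A x (Pi.single (.inl i) 1)
  have h₂' := symplecticForm_smul A x (Pi.single (.inr i) 1)
  rw [h₁, symplecticForm_single_inl, symplecticForm_single_inl] at h₁'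
  rw [h₂, symplecticForm_single_inr, symplecticForm_single_inr, neg_inj] at h₂'
  exact ⟨h₂'.trans (hx i hi).1, h₁'.trans (hx i hi).2⟩

variable (R) in
def transvectionClosure (s : Set l) : Subgroup (symplecticGroup l R) :=
  Subgroup.closure (transvection '' (vanishingOn R s : Set (l ⊕ l → R)))

lemma transvectionClosure_le_pairStabilizer (s : Set l) :
    transvectionClosure R s ≤ pairStabilizer R s := by
  refine Subgroup.closure_le _ |>.2 ?_
  rintro _ ⟨c, hc, rfl⟩
  refine mem_pairStabilizer.2 fun i hi => ⟨?_, ?_⟩ <;>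
    rw [transvection_smul, ← symplecticForm_isAlt.neg_eq]
  · rw [symplecticForm_single_inl, (hc i hi).2, neg_zero, zero_smul, add_zero]
  · rw [symplecticForm_single_inr, (hc i hi).1, neg_zero, neg_zero, zero_smul, add_zero]

lemma zmod_two_eq_zero_or_eq_one (u : ZMod 2) : u = 0 ∨ u = 1 := by decide +revert

lemma symplecticForm_comm (x y : l ⊕ l → ZMod 2) : symplecticForm x y = symplecticForm y x := by
  rw [← symplecticForm_isAlt.neg_eq, ZModModule.neg_eq_self]

@[simp]
lemma transvection_mul_self (v : l ⊕ l → ZMod 2) : transvection v * transvection v = 1 := by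
  ext : 1
  show symplecticTransvection v * symplecticTransvection v = 1
  have := list_prod_map_symplecticTransvection (L := [v, v]) (by simp [symplecticForm_isAlt v])
  simpa [ZModModule.add_self] using this

lemma transvection_smul_of_symplecticForm_eq_zero {v x : l ⊕ l → ZMod 2}
    (h : symplecticForm x v = 0) :
    transvection v • x = x := by
  rw [transvection_smul, h, zero_smul, add_zero]

lemma transvection_smul_of_symplecticForm_eq_one {v x : l ⊕ l → ZMod 2}
    (h : symplecticForm x v = 1) :
    transvection v • x = x + v := by
  rw [transvection_smul, h, one_smul]

lemma transvection_add_smul {u v : l ⊕ l → ZMod 2} (h : symplecticForm u v = 1) :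
    transvection (u + v) • u = v := by
  rw [transvection_smul_of_symplecticForm_eq_one
      (by rw [map_add, symplecticForm_isAlt u, zero_add, h]),
    ← add_assoc, ZModModule.add_self, zero_add]

lemma exists_symplecticForm_eq_one {s : Set l} {x : l ⊕ l → ZMod 2}
    (hx : x ∈ vanishingOn (ZMod 2) s) (hx0 : x ≠ 0) :
    ∃ c ∈ vanishingOn (ZMod 2) s, symplecticForm x c = 1 := by
  obtain ⟨j, hj⟩ := Function.ne_iff.1 hx0
  have hj1 : x j = 1 := (zmod_two_eq_zero_or_eq_one _).resolve_left hj
  cases j with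
  | inl i =>
    refine ⟨Pi.single (.inr i) 1, fun k hk => ?_, by rw [symplecticForm_single_inr, hj1]; rfl⟩
    obtain rfl | hki := eq_or_ne k i
    · exact absurd (hx k hk).1 hj
    · simp [hki]
  | inr i =>
    refine ⟨Pi.single (.inl i) 1, fun k hk => ?_, by rw [symplecticForm_single_inl, hj1]⟩
    obtain rfl | hki := eq_or_ne k i
    · exact absurd (hx k hk).2 hj
    · simp [hki]

lemma exists_symplecticForm_eq_one_and_eq_one {s : Set l} {x y : l ⊕ l → ZMod 2}
    (hx : x ∈ vanishingOn (ZMod 2) s) (hy : y ∈ vanishingOn (ZMod 2) s) (hx0 : x ≠ 0)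
    (hy0 : y ≠ 0) :
    ∃ c ∈ vanishingOn (ZMod 2) s, symplecticForm x c = 1 ∧ symplecticForm y c = 1 := by
  obtain ⟨c₁, hc₁, hxc₁⟩ := exists_symplecticForm_eq_one hx hx0
  obtain ⟨c₂, hc₂, hyc₂⟩ := exists_symplecticForm_eq_one hy hy0
  rcases zmod_two_eq_zero_or_eq_one (symplecticForm y c₁) with hyc₁ | hyc₁
  · rcases zmod_two_eq_zero_or_eq_one (symplecticForm x c₂) with hxc₂ | hxc₂
    · exact ⟨c₁ + c₂, add_mem hc₁ hc₂, by simp [hxc₁, hxc₂],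
        by simp [hyc₁, hyc₂]⟩
    · exact ⟨c₂, hc₂, hxc₂, hyc₂⟩
  · exact ⟨c₁, hc₁, hxc₁, hyc₁⟩

lemma transvection_mem_transvectionClosure {s : Set l} {v : l ⊕ l → ZMod 2}
    (hv : v ∈ vanishingOn (ZMod 2) s) : transvection v ∈ transvectionClosure (ZMod 2) s :=
  Subgroup.subset_closure ⟨v, hv, rfl⟩

lemma exists_mem_transvectionClosure_smul_eq {s : Set l} {u v : l ⊕ l → ZMod 2}
    (hu : u ∈ vanishingOn (ZMod 2) s) (hv : v ∈ vanishingOn (ZMod 2) s) (hu0 : u ≠ 0)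
    (hv0 : v ≠ 0) : ∃ w ∈ transvectionClosure (ZMod 2) s, w • u = v := by
  by_cases huv : symplecticForm u v = 1
  · exact ⟨_, transvection_mem_transvectionClosure (add_mem hu hv), transvection_add_smul huv⟩
  obtain ⟨c, hc, huc, hvc⟩ := exists_symplecticForm_eq_one_and_eq_one hu hv hu0 hv0
  refine ⟨transvection (c + v) * transvection (u + c),
    mul_mem (transvection_mem_transvectionClosure (add_mem hc hv))
      (transvection_mem_transvectionClosure (add_mem hu hc)), ?_⟩
  rw [mul_smul, transvection_add_smul huc,
    transvection_add_smul (by rwa [symplecticForm_comm])]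

lemma exists_mem_transvectionClosure_smul_eq_and_smul_eq {s : Set l} {a b b' : l ⊕ l → ZMod 2}
    (ha : a ∈ vanishingOn (ZMod 2) s) (hb : b ∈ vanishingOn (ZMod 2) s)
    (hb' : b' ∈ vanishingOn (ZMod 2) s) (hab : symplecticForm a b = 1)
    (hab' : symplecticForm a b' = 1) :
    ∃ w ∈ transvectionClosure (ZMod 2) s, w • a = a ∧ w • b = b' := by
  by_cases hbb' : symplecticForm b b' = 1
  · refine ⟨_, transvection_mem_transvectionClosure (add_mem hb hb'), ?_,
      transvection_add_smul hbb'⟩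
    exact transvection_smul_of_symplecticForm_eq_zero (by simp [hab, hab', ZModModule.add_self])
  have hbb'0 : symplecticForm b b' = 0 := (zmod_two_eq_zero_or_eq_one _).resolve_right hbb'
  refine ⟨transvection (b + a + b') * transvection a,
    mul_mem (transvection_mem_transvectionClosure (add_mem (add_mem hb ha) hb'))
      (transvection_mem_transvectionClosure ha), ?_, ?_⟩
  · rw [mul_smul, transvection_smul_of_symplecticForm_eq_zero (symplecticForm_isAlt a)]
    refine transvection_smul_of_symplecticForm_eq_zero ?_
    simp [symplecticForm_isAlt a, hab, hab', ZModModule.add_self]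
  · rw [mul_smul,
      transvection_smul_of_symplecticForm_eq_one (x := b) (by rwa [symplecticForm_comm]),
      transvection_add_smul]
    simp [hab', hbb'0]

lemma exists_mul_mem_pairStabilizer_insert {s : Set l} {k : l} (hk : k ∉ s)
    {g : symplecticGroup l (ZMod 2)} (hg : g ∈ pairStabilizer (ZMod 2) s) :
    ∃ w ∈ transvectionClosure (ZMod 2) s, w * g ∈ pairStabilizer (ZMod 2) (insert k s) := by
  set e : l ⊕ l → ZMod 2 := Pi.single (.inl k) 1
  set f : l ⊕ l → ZMod 2 := Pi.single (.inr k) 1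
  have he : e ∈ vanishingOn (ZMod 2) s := fun i hi => by simp [e, ne_of_mem_of_not_mem hi hk]
  have hf : f ∈ vanishingOn (ZMod 2) s := fun i hi => by simp [f, ne_of_mem_of_not_mem hi hk]
  have hef : symplecticForm e f = 1 := by rw [symplecticForm_single_inr]; simp [e]
  have hW : transvectionClosure (ZMod 2) s ≤ pairStabilizer (ZMod 2) s :=
    transvectionClosure_le_pairStabilizer s
  obtain ⟨w₁, hw₁, hw₁e⟩ := exists_mem_transvectionClosure_smul_eq
    (smul_mem_vanishingOn hg he) he
    ((smul_ne_zero_iff_ne g).2 (by simp [e])) (by simp [e])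
  obtain ⟨w₂, hw₂, hw₂e, hw₂f⟩ := exists_mem_transvectionClosure_smul_eq_and_smul_eq he
    (smul_mem_vanishingOn (mul_mem (hW hw₁) hg) hf) hf
    (by rw [← hef, ← symplecticForm_smul (w₁ * g) e f, mul_smul w₁ g e, hw₁e]) hef
  refine ⟨w₂ * w₁, mul_mem hw₂ hw₁, mem_pairStabilizer.2 ?_⟩
  rintro i (rfl | hi)
  · constructor
    · change (w₂ * w₁ * g) • e = e
      rw [mul_assoc, mul_smul, mul_smul, hw₁e, hw₂e]
    · change (w₂ * w₁ * g) • f = f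
      rw [mul_assoc, mul_smul, hw₂f]
  · exact mem_pairStabilizer.1 (mul_mem (hW (mul_mem hw₂ hw₁)) hg) i hi

lemma closure_range_transvection :
    Subgroup.closure
      (Set.range (transvection : (l ⊕ l → ZMod 2) → symplecticGroup l (ZMod 2))) = ⊤ := by
  suffices h : ∀ t : Finset l, pairStabilizer (ZMod 2) (↑t : Set l)ᶜ ≤
      Subgroup.closure (Set.range transvection) by
    simpa using h Finset.univ
  intro t
  induction t using Finset.induction_on with
  | empty => simp
  | insert k t hk ih =>
    intro g hg
    obtain ⟨w, hw, hwg⟩ := exists_mul_mem_pairStabilizer_insert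
      (s := (↑(insert k t) : Set l)ᶜ) (k := k) (by simp) hg
    have hkt : insert k (↑(insert k t) : Set l)ᶜ = (↑t)ᶜ := by
      ext i
      obtain rfl | hik := eq_or_ne i k <;> simp [*]
    rw [hkt] at hwg
    have hw' := Subgroup.closure_mono (Set.image_subset_range _ _) hw
    simpa using mul_mem (inv_mem hw') (ih hwg)

lemma mul_transvections_eq_transvection_of_isotropic {P : Submodule (ZMod 2) (l ⊕ l → ZMod 2)}
    (hP : ∀ u ∈ P, ∀ w ∈ P, symplecticForm u w = 0) {a b c : l ⊕ l → ZMod 2}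
    (ha : a ∈ P) (hb : b ∈ P) (hc : c ∈ P) :
    transvection b * transvection (a + b) * transvection c * transvection (a + c) *
      transvection (b + c) * transvection (a + b + c) = transvection a := by
  set L := [b, a + b, c, a + c, b + c, a + b + c]
  have hLP : ∀ u ∈ L, u ∈ P := by
    simp only [L, List.forall_mem_cons, List.not_mem_nil, IsEmpty.forall_iff, implies_true,
      and_true]
    exact ⟨hb, add_mem ha hb, hc, add_mem ha hc, add_mem hb hc, add_mem (add_mem ha hb) hc⟩
  have hL := list_prod_map_symplecticTransvection fun u hu w hw => hP u (hLP u hu) w (hLP w hw)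
  simp only [L, List.map_cons, List.map_nil, List.prod_cons, List.prod_nil, mul_one,
    List.sum_cons, List.sum_nil, add_zero] at hL
  ext : 1
  change symplecticTransvection b * symplecticTransvection (a + b) * symplecticTransvection c *
    symplecticTransvection (a + c) * symplecticTransvection (b + c) *
    symplecticTransvection (a + b + c) = symplecticTransvection a
  simp only [mul_assoc]
  rw [hL, symplecticTransvection]
  congr 1
  -- the cross terms cancel in pairs and `a` contributes three times
  ext i j
  simp only [Matrix.add_apply, vecMulVec_apply, mulVec_add, Pi.add_apply]
  generalize a i = a₁, b i = b₁, c i = c₁, (J l (ZMod 2) *ᵥ a) j = a₂,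
    (J l (ZMod 2) *ᵥ b) j = b₂, (J l (ZMod 2) *ᵥ c) j = c₂
  revert a₁ b₁ c₁ a₂ b₂ c₂
  decide

section Normal

variable {N : Subgroup (symplecticGroup l (ZMod 2))} [N.Normal]

lemma mk_transvection_smul_eq {u v : l ⊕ l → ZMod 2}
    (h : (transvection u : symplecticGroup l (ZMod 2) ⧸ N) = transvection v)
    (g : symplecticGroup l (ZMod 2)) :
    (transvection (g • u) : symplecticGroup l (ZMod 2) ⧸ N) = transvection (g • v) := by
  simp only [← conj_transvection, QuotientGroup.mk_mul, h]

lemma exists_ne_mk_transvection_eq {g : symplecticGroup l (ZMod 2)} (hgN : g ∈ N) (hg : g ≠ 1) :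
    ∃ x y : l ⊕ l → ZMod 2, y ≠ 0 ∧ x ≠ y ∧
      (transvection x : symplecticGroup l (ZMod 2) ⧸ N) = transvection y := by
  obtain ⟨j, hj⟩ : ∃ j, g • (Pi.single j 1 : l ⊕ l → ZMod 2) ≠ Pi.single j 1 := by
    by_contra! h
    exact hg (eq_one_of_forall_smul_single h)
  have hx : (Pi.single j 1 : l ⊕ l → ZMod 2) ≠ 0 := by simp
  refine ⟨_, _, (smul_ne_zero_iff_ne g).2 hx, Ne.symm hj, ?_⟩
  simp [← conj_transvection, (QuotientGroup.eq_one_iff g).2 hgN]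

lemma exists_symplecticForm_eq_one_mk_transvection_eq {x y : l ⊕ l → ZMod 2} (hy : y ≠ 0)
    (hxy : x ≠ y) (h : (transvection x : symplecticGroup l (ZMod 2) ⧸ N) = transvection y) :
    ∃ X Y : l ⊕ l → ZMod 2, symplecticForm X Y = 1 ∧
      (transvection X : symplecticGroup l (ZMod 2) ⧸ N) = transvection Y := by
  by_cases hxy1 : symplecticForm x y = 1
  · exact ⟨x, y, hxy1, h⟩
  have hxy0 : x + y ≠ 0 := fun h0 => hxy (eq_of_sub_eq_zero (by rwa [ZModModule.sub_eq_add]))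
  obtain ⟨d, -, hyd, hxyd⟩ :=
    exists_symplecticForm_eq_one_and_eq_one (s := ∅) (by simp) (by simp) hy hxy0
  have hxd : symplecticForm x d = 0 := by simpa [hyd] using hxyd
  refine ⟨y, y + d, by simp [symplecticForm_isAlt y, hyd], h.symm.trans ?_⟩
  simpa [transvection_smul_of_symplecticForm_eq_zero hxd,
    transvection_smul_of_symplecticForm_eq_one hyd] using
    mk_transvection_smul_eq h (transvection d)

lemma mk_transvection_eq_of_symplecticForm_eq_one {X Y z : l ⊕ l → ZMod 2}
    (hXY : symplecticForm X Y = 1)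
    (h : (transvection X : symplecticGroup l (ZMod 2) ⧸ N) = transvection Y)
    (hXz : symplecticForm X z = 1) :
    (transvection X : symplecticGroup l (ZMod 2) ⧸ N) = transvection z := by
  obtain ⟨w, -, hwX, hwY⟩ := exists_mem_transvectionClosure_smul_eq_and_smul_eq (s := ∅)
    (by simp) (by simp) (by simp) hXY hXz
  simpa [hwX, hwY] using mk_transvection_smul_eq h w

lemma mk_transvection_eq_of_ne_zero {X Y v : l ⊕ l → ZMod 2} (hXY : symplecticForm X Y = 1)
    (h : (transvection X : symplecticGroup l (ZMod 2) ⧸ N) = transvection Y) (hv : v ≠ 0) :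
    (transvection X : symplecticGroup l (ZMod 2) ⧸ N) = transvection v := by
  by_cases hXv : symplecticForm X v = 1
  · exact mk_transvection_eq_of_symplecticForm_eq_one hXY h hXv
  have hX : X ≠ 0 := by rintro rfl; simp at hXY
  obtain ⟨m, -, hXm, hvm⟩ :=
    exists_symplecticForm_eq_one_and_eq_one (s := ∅) (by simp) (by simp) hX hv
  have hXm' := mk_transvection_eq_of_symplecticForm_eq_one hXY h hXm
  have hXvm := mk_transvection_eq_of_symplecticForm_eq_one hXY h (z := v + m)
    (by simp [(zmod_two_eq_zero_or_eq_one _).resolve_right hXv, hXm])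
  have hmv := mk_transvection_smul_eq (hXm'.symm.trans hXvm) (transvection m)
  rw [transvection_smul_of_symplecticForm_eq_zero (symplecticForm_isAlt m),
    transvection_smul_of_symplecticForm_eq_one (x := v + m) (by simp [hvm, symplecticForm_isAlt m]),
    add_assoc, ZModModule.add_self, add_zero] at hmv
  exact hXm'.trans hmv

lemma eq_one_of_forall_mk_transvection_eq (hl : 2 < Fintype.card l)
    {τ : symplecticGroup l (ZMod 2) ⧸ N}
    (hτ : ∀ v : l ⊕ l → ZMod 2, v ≠ 0 →
      (transvection v : symplecticGroup l (ZMod 2) ⧸ N) = τ) :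
    τ = 1 := by
  obtain ⟨i, j, k, hij, hik, hjk⟩ := Fintype.two_lt_card_iff.1 hl
  set a : l ⊕ l → ZMod 2 := Pi.single (.inl i) 1
  set b : l ⊕ l → ZMod 2 := Pi.single (.inl j) 1
  set c : l ⊕ l → ZMod 2 := Pi.single (.inl k) 1
  have hne (x : l ⊕ l → ZMod 2) (m : l) (hx : x (.inl m) = 1) : x ≠ 0 :=
    fun h0 => by simp [h0] at hx
  have hτ2 : τ * τ = 1 := by
    rw [← hτ a (hne a i (by simp [a])), ← QuotientGroup.mk_mul, transvection_mul_self,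
      QuotientGroup.mk_one]
  set P := LinearMap.ker (LinearMap.funLeft (ZMod 2) (ZMod 2) (Sum.inr : l → l ⊕ l))
  have hP : ∀ u ∈ P, ∀ w ∈ P, symplecticForm u w = 0 := fun u hu w hw =>
    symplecticForm_eq_zero_of_comp_inr_eq_zero hu hw
  have hmem (m : l) : (Pi.single (.inl m) 1 : l ⊕ l → ZMod 2) ∈ P := by
    ext; simp
  have h6 := congrArg (QuotientGroup.mk (s := N))
    (mul_transvections_eq_transvection_of_isotropic hP (hmem i) (hmem j) (hmem k))
  simp only [QuotientGroup.mk_mul] at h6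
  rw [hτ b (hne b j (by simp [b])), hτ (a + b) (hne _ j (by simp [a, b, hij])),
    hτ c (hne c k (by simp [c])), hτ (a + c) (hne _ k (by simp [a, c, hik])),
    hτ (b + c) (hne _ k (by simp [b, c, hjk])),
    hτ (a + b + c) (hne _ k (by simp [a, b, c, hik, hjk])), hτ a (hne a i (by simp [a]))] at h6
  rw [← h6, hτ2, one_mul, hτ2, one_mul, hτ2]

theorem eq_top_of_mem_of_ne_one (hl : 2 < Fintype.card l) {g : symplecticGroup l (ZMod 2)}
    (hgN : g ∈ N) (hg : g ≠ 1) : N = ⊤ := by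
  obtain ⟨x, y, hy, hxy, h⟩ := exists_ne_mk_transvection_eq hgN hg
  obtain ⟨X, Y, hXY, hXY'⟩ := exists_symplecticForm_eq_one_mk_transvection_eq hy hxy h
  have hτ := eq_one_of_forall_mk_transvection_eq hl fun v hv =>
    (mk_transvection_eq_of_ne_zero hXY hXY' hv).symm
  refine eq_top_iff.2 <| closure_range_transvection (l := l).ge.trans <|
    (Subgroup.closure_le N).2 ?_
  rintro _ ⟨v, rfl⟩
  obtain rfl | hv := eq_or_ne v 0
  · simp
  · rw [SetLike.mem_coe, ← QuotientGroup.eq_one_iff,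
      ← mk_transvection_eq_of_ne_zero hXY hXY' hv, hτ]

end Normal

theorem isSimpleGroup_zmod_two (hl : 2 < Fintype.card l) :
    IsSimpleGroup (symplecticGroup l (ZMod 2)) where
  exists_pair_ne := by
    obtain ⟨i⟩ : Nonempty l := Fintype.card_pos_iff.1 (by omega)
    refine ⟨transvection (Pi.single (.inl i) 1), 1, fun h => ?_⟩
    have := congrArg (· • (Pi.single (.inr i) 1 : l ⊕ l → ZMod 2)) h
    simp [transvection_smul, symplecticForm_single_inl] at this
  eq_bot_or_eq_top_of_normal N _ :=
    N.bot_or_exists_ne_one.imp_right fun ⟨_, hgN, hg⟩ => eq_top_of_mem_of_ne_one hl hgN hg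

section Permutations

variable {l R : Type*} [Fintype l] [DecidableEq l] [CommRing R]

def permHom : Equiv.Perm l →* symplecticGroup l R where
  toFun σ := ⟨fromBlocks (permMatrixHom σ) 0 0 (permMatrixHom σ), by
    simp [fromBlocks_mem_iff, ← permMatrix_mul]⟩
  map_one' := by ext : 1; simp
  map_mul' σ τ := by ext : 1; simp [fromBlocks_multiply]

lemma permHom_injective [Nontrivial R] :
    Function.Injective (permHom : Equiv.Perm l →* symplecticGroup l R) := by
  intro σ τ h
  have := congrArg
    (fun A : symplecticGroup l R => toBlocks₁₁ (A : Matrix (l ⊕ l) (l ⊕ l) R)) h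
  simp only [permHom, MonoidHom.coe_mk, OneHom.coe_mk, permMatrixHom_apply,
    toBlocks_fromBlocks₁₁] at this
  refine inv_injective (Equiv.ext fun x => ?_)
  simpa [PEquiv.toMatrix_apply, eq_comm] using congrFun (congrFun this x) (σ⁻¹ x)

lemma transvection_notMem_range_permHom [Nontrivial R] (i : l) :
    transvection (Pi.single (.inl i) 1 : l ⊕ l → R) ∉
      (permHom : Equiv.Perm l →* symplecticGroup l R).range := by
  rintro ⟨σ, hσ⟩
  have := congrArg
    (fun A : symplecticGroup l R => (A : Matrix (l ⊕ l) (l ⊕ l) R) (.inl i) (.inr i)) hσ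
  simp [permHom, transvection, symplecticTransvection, J, vecMulVec_apply] at this

end Permutations

end SymplecticGroup

lemma exists_injective_monoidHom_perm_fin (H : Type*) [Group H] [Finite H] {n : ℕ}
    (hn : Nat.card H ≤ n) : ∃ ψ : H →* Equiv.Perm (Fin n), Function.Injective ψ :=
  let e : H ↪ Fin n := (Finite.equivFin H).toEmbedding.trans (Fin.castLEEmb hn)
  ⟨(Equiv.Perm.viaEmbeddingHom e).comp (MulAction.toPermHom H H),
    (Equiv.Perm.viaEmbeddingHom_injective e).comp MulAction.toPerm_injective⟩

/-- Every nontrivial finite group `H` embeds into a finite superperfect group forming a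
nontrivial tight pair: there are `n ≥ 4` and an injective homomorphism
`φ : H →* Sp(2n, 𝔽₂)` with proper image, such that the only normal subgroup of
`Sp(2n, 𝔽₂)` containing the image of `φ` is the whole group. -/
theorem finite_group_tight_pair_in_symplectic (H : Type*) [Group H] [Finite H]
    [Nontrivial H] :
    ∃ n : ℕ, 4 ≤ n ∧ ∃ φ : H →* Matrix.symplecticGroup (Fin n) (ZMod 2),
      Function.Injective φ ∧ φ.range ≠ ⊤ ∧
      ∀ N : Subgroup (Matrix.symplecticGroup (Fin n) (ZMod 2)),
        N.Normal → φ.range ≤ N → N = ⊤ := by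
  set n := max (Nat.card H) 4
  obtain ⟨ψ, hψ⟩ := exists_injective_monoidHom_perm_fin H (le_max_left (Nat.card H) 4)
  let φ : H →* Matrix.symplecticGroup (Fin n) (ZMod 2) := SymplecticGroup.permHom.comp ψ
  have hφ : Function.Injective φ := SymplecticGroup.permHom_injective.comp hψ
  have := SymplecticGroup.isSimpleGroup_zmod_two (l := Fin n) (by simp [n])
  refine ⟨n, le_max_right _ _, φ, hφ, fun htop => ?_, fun N hN hle => ?_⟩
  · obtain ⟨h, hh⟩ :
        SymplecticGroup.transvection (Pi.single (.inl ⟨0, by omega⟩) 1) ∈ φ.range :=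
      htop ▸ Subgroup.mem_top _
    exact SymplecticGroup.transvection_notMem_range_permHom _ ⟨ψ h, hh⟩
  · refine (IsSimpleGroup.eq_bot_or_eq_top_of_normal N hN).resolve_left fun hbot => ?_
    obtain ⟨h, hh⟩ := exists_ne (1 : H)
    exact hh ((injective_iff_map_eq_one _).1 hφ h (by simpa [hbot] using hle ⟨h, rfl⟩))
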